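/- Suppose $X_1, \ldots, X_k$ are real random variables with mean zero, variance one, satisfying $\mathrm{Cov}(X_i, X_j) \ge \rho > 0$ for all $i \neq j$. Let $\overline{X} = \frac{1}{k}\sum_{i=1}^k X_i$. Then for any $t > 0$, $\mathbb{P}\{\#\{i : |X_i - \overline{X}| > t\} \ge k/2\} \le \frac{2(1-\rho)}{t^2}$. -/

import Mathlib

/-!
Let `S = ∑ᵢ (Xᵢ - X̄)²`. Pointwise `S = ∑ᵢ Xᵢ² - (∑ᵢ Xᵢ)² / k`, so by the variance and covariance
hypotheses `𝔼 S ≤ k - (k + k(k-1)ρ) / k = (k-1)(1-ρ)`. On the event in question at least `k/2`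
of the squares `(Xᵢ - X̄)²` exceed `t²`, so `S ≥ k t² / 2` there, and Markov's inequality gives the
bound `2(k-1)(1-ρ) / (k t²) ≤ 2(1-ρ) / t²`.
-/

open MeasureTheory Finset

lemma card_filter_lt_abs_mul_sq_le_sum_sq {ι : Type*} (s : Finset ι) (y : ι → ℝ) {t : ℝ}
    (ht : 0 ≤ t) :
    (#(s.filter fun i => t < |y i|) : ℝ) * t ^ 2 ≤ ∑ i ∈ s, y i ^ 2 :=
  calc (#(s.filter fun i => t < |y i|) : ℝ) * t ^ 2
      = ∑ _i ∈ s.filter fun i => t < |y i|, t ^ 2 := by rw [sum_const, nsmul_eq_mul]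
    _ ≤ ∑ i ∈ s.filter fun i => t < |y i|, y i ^ 2 := sum_le_sum fun i hi => by
        simpa only [sq_abs] using pow_le_pow_left₀ ht (mem_filter.1 hi).2.le 2
    _ ≤ ∑ i ∈ s, y i ^ 2 :=
        sum_le_sum_of_subset_of_nonneg (filter_subset _ _) fun i _ _ => sq_nonneg _

section FiniteSums

variable {ι : Type*} [Fintype ι]

lemma sum_sq_sub_average (a : ι → ℝ) :
    ∑ i, (a i - 1 / (Fintype.card ι : ℝ) * ∑ j, a j) ^ 2
      = ∑ i, a i ^ 2 - 1 / (Fintype.card ι : ℝ) * (∑ i, a i) ^ 2 := by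
  rcases isEmpty_or_nonempty ι with hι | hι
  · simp
  have hn : (Fintype.card ι : ℝ) ≠ 0 := by positivity
  simp only [sub_sq, sum_add_distrib, sum_sub_distrib, ← sum_mul, ← mul_sum, sum_const, card_univ,
    nsmul_eq_mul]
  field_simp
  ring

lemma sum_diag_add_card_mul_le_sum_sum (c : ι → ι → ℝ) {ρ : ℝ}
    (hc : ∀ i j, i ≠ j → ρ ≤ c i j) :
    ∑ i, c i i + Fintype.card ι * ((Fintype.card ι - 1) * ρ) ≤ ∑ i, ∑ j, c i j := by
  classical
  calc ∑ i, c i i + Fintype.card ι * ((Fintype.card ι - 1) * ρ)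
      = ∑ i, (c i i + (Fintype.card ι - 1) * ρ) := by simp [sum_add_distrib]
    _ ≤ ∑ i, ∑ j, c i j := sum_le_sum fun i _ => ?_
  rw [← add_sum_erase _ _ (mem_univ i)]
  have hcard : (#(univ.erase i) : ℝ) = Fintype.card ι - 1 := by
    rw [card_erase_of_mem (mem_univ i), Nat.cast_sub (card_pos.2 ⟨i, mem_univ i⟩)]
    simp
  gcongr
  simpa only [hcard, nsmul_eq_mul] using
    card_nsmul_le_sum (univ.erase i) (c i) ρ fun j hj => hc i j (ne_of_mem_erase hj).symm

end FiniteSums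

section SquaredDeviations

variable {ι Ω : Type*} [Fintype ι] [MeasurableSpace Ω] {P : Measure Ω} {X : ι → Ω → ℝ}

lemma memLp_sub_average (hX : ∀ i, MemLp (X i) 2 P) (i : ι) :
    MemLp (fun ω => X i ω - 1 / (Fintype.card ι : ℝ) * ∑ j, X j ω) 2 P :=
  (hX i).sub ((memLp_finsetSum _ fun j _ => hX j).const_mul _)

lemma integral_sq_sum (hX : ∀ i, MemLp (X i) 2 P) :
    ∫ ω, (∑ i, X i ω) ^ 2 ∂P = ∑ i, ∑ j, ∫ ω, X i ω * X j ω ∂P := by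
  have hXX : ∀ i j, Integrable (fun ω => X i ω * X j ω) P := fun i j => (hX i).integrable_mul (hX j)
  simp_rw [sq, sum_mul_sum]
  rw [integral_finsetSum _ fun i _ => integrable_finsetSum _ fun j _ => hXX i j]
  exact sum_congr rfl fun i _ => integral_finsetSum _ fun j _ => hXX i j

lemma integral_sum_sq_sub_average (hX : ∀ i, MemLp (X i) 2 P) :
    ∫ ω, ∑ i, (X i ω - 1 / (Fintype.card ι : ℝ) * ∑ j, X j ω) ^ 2 ∂P
      = ∑ i, ∫ ω, X i ω ^ 2 ∂P
          - 1 / (Fintype.card ι : ℝ) * ∑ i, ∑ j, ∫ ω, X i ω * X j ω ∂P := by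
  simp_rw [sum_sq_sub_average]
  rw [integral_sub (integrable_finsetSum _ fun i _ => (hX i).integrable_sq)
      ((memLp_finsetSum _ fun j _ => hX j).integrable_sq.const_mul _),
    integral_finsetSum _ fun i _ => (hX i).integrable_sq, integral_const_mul, integral_sq_sum hX]

lemma integral_sum_sq_sub_average_le [Nonempty ι] (hX : ∀ i, MemLp (X i) 2 P) {ρ : ℝ}
    (hvar : ∀ i, ∫ ω, X i ω ^ 2 ∂P = 1) (hcov : ∀ i j, i ≠ j → ρ ≤ ∫ ω, X i ω * X j ω ∂P) :
    ∫ ω, ∑ i, (X i ω - 1 / (Fintype.card ι : ℝ) * ∑ j, X j ω) ^ 2 ∂P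
      ≤ (Fintype.card ι - 1) * (1 - ρ) := by
  have hn : (0 : ℝ) < Fintype.card ι := by positivity
  have hsum := sum_diag_add_card_mul_le_sum_sum _ hcov
  simp only [← sq, hvar, sum_const, card_univ, nsmul_eq_mul, mul_one] at hsum
  have havg : 1 + (Fintype.card ι - 1) * ρ
      ≤ 1 / (Fintype.card ι : ℝ) * ∑ i, ∑ j, ∫ ω, X i ω * X j ω ∂P := by
    rw [one_div, le_inv_mul_iff₀ hn]
    linarith
  rw [integral_sum_sq_sub_average hX]
  simp only [hvar, sum_const, card_univ, nsmul_eq_mul, mul_one]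
  linarith

end SquaredDeviations

lemma measure_ge_le_ofReal_integral_div {Ω : Type*} [MeasurableSpace Ω] {P : Measure Ω}
    [IsFiniteMeasure P] {f : Ω → ℝ} (hf0 : 0 ≤ᵐ[P] f) (hf : Integrable f P) {a : ℝ} (ha : 0 < a) :
    P {ω | a ≤ f ω} ≤ ENNReal.ofReal ((∫ ω, f ω ∂P) / a) := by
  rw [ENNReal.le_ofReal_iff_toReal_le (measure_ne_top _ _)
      (div_nonneg (integral_nonneg_of_ae hf0) ha.le), le_div_iff₀ ha, mul_comm]
  exact mul_meas_ge_le_integral_of_nonneg hf0 hf a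

theorem stmt_6_general {Ω : Type*} [MeasurableSpace Ω] (P : Measure Ω) [IsProbabilityMeasure P]
    (k : ℕ) (hk : 1 ≤ k) (ρ : ℝ) (hρ1 : ρ ≤ 1)
    (X : Fin k → Ω → ℝ)
    (hL2 : ∀ i, MemLp (X i) 2 P)
    (hvar : ∀ i, ∫ ω, (X i ω) ^ 2 ∂P = 1)
    (hcov : ∀ i j, i ≠ j → ρ ≤ ∫ ω, X i ω * X j ω ∂P)
    (t : ℝ) (ht : 0 < t) :
    P {ω | (k : ℝ) / 2 ≤
        ((Finset.univ.filter
          (fun i : Fin k => t < |X i ω - (1 / (k : ℝ)) * ∑ l : Fin k, X l ω|)).card : ℝ)} ≤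
      ENNReal.ofReal (2 * (1 - ρ) / t ^ 2) := by
  have : NeZero k := ⟨by omega⟩
  set S : Ω → ℝ := fun ω => ∑ i, (X i ω - 1 / (k : ℝ) * ∑ l, X l ω) ^ 2
  have hS0 : 0 ≤ᵐ[P] S := .of_forall fun ω => sum_nonneg fun i _ => sq_nonneg _
  have hS : Integrable S P := by
    simpa only [Fintype.card_fin] using
      integrable_finsetSum _ fun i _ => (memLp_sub_average hL2 i).integrable_sq
  have hES : ∫ ω, S ω ∂P ≤ k * (1 - ρ) := by
    have := integral_sum_sq_sub_average_le hL2 hvar hcov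
    rw [Fintype.card_fin] at this
    nlinarith
  have hevent : {ω | (k : ℝ) / 2 ≤
        ((Finset.univ.filter
          (fun i : Fin k => t < |X i ω - (1 / (k : ℝ)) * ∑ l : Fin k, X l ω|)).card : ℝ)}
      ⊆ {ω | k / 2 * t ^ 2 ≤ S ω} := fun ω hω =>
    (mul_le_mul_of_nonneg_right hω (sq_nonneg t)).trans
      (card_filter_lt_abs_mul_sq_le_sum_sq _ _ ht.le)
  calc _ ≤ P {ω | k / 2 * t ^ 2 ≤ S ω} := measure_mono hevent
    _ ≤ ENNReal.ofReal ((∫ ω, S ω ∂P) / (k / 2 * t ^ 2)) :=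
        measure_ge_le_ofReal_integral_div hS0 hS (by positivity)
    _ ≤ ENNReal.ofReal (2 * (1 - ρ) / t ^ 2) := by
        gcongr ENNReal.ofReal ?_
        rw [div_le_div_iff₀ (by positivity) (by positivity)]
        nlinarith [mul_le_mul_of_nonneg_right hES (sq_nonneg t)]

theorem stmt_6 {Ω : Type*} [MeasurableSpace Ω] (P : Measure Ω) [IsProbabilityMeasure P]
    (k : ℕ) (hk : 1 ≤ k) (ρ : ℝ) (hρ0 : 0 < ρ) (hρ1 : ρ ≤ 1)
    (X : Fin k → Ω → ℝ) (hmeas : ∀ i, Measurable (X i))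
    (hL2 : ∀ i, MemLp (X i) 2 P)
    (hmean : ∀ i, ∫ ω, X i ω ∂P = 0)
    (hvar : ∀ i, ∫ ω, (X i ω) ^ 2 ∂P = 1)
    (hcov : ∀ i j, i ≠ j → ρ ≤ ∫ ω, X i ω * X j ω ∂P)
    (t : ℝ) (ht : 0 < t) :
    P {ω | (k : ℝ) / 2 ≤
        ((Finset.univ.filter
          (fun i : Fin k => t < |X i ω - (1 / (k : ℝ)) * ∑ l : Fin k, X l ω|)).card : ℝ)} ≤
      ENNReal.ofReal (2 * (1 - ρ) / t ^ 2) :=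
  stmt_6_general P k hk ρ hρ1 X hL2 hvar hcov t ht
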